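/- Let G be obtained by gluing two copies of K6 along an edge {e, f} and then deleting that edge, i.e., G = (K6 ∪ K6) \ {(e,f)} where the two copies share exactly the vertices e and f. Then G is a minor of α1 + K̄2, where α1 is one of the minor-minimal nonouter-projective-planar graphs; consequently, since G is intrinsically projectively linked, so is α1 + K̄2. -/

import Mathlib

open SimpleGraph

/-- `H` is a minor of `G`: branch-set formulation. -/
def IsMinor {W V : Type*} (H : SimpleGraph W) (G : SimpleGraph V) : Prop :=
  ∃ ρ : W → Set V,
    (∀ w, (ρ w).Nonempty) ∧
    (∀ w, (G.induce (ρ w)).Connected) ∧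
    (Pairwise fun w w' => Disjoint (ρ w) (ρ w')) ∧
    ∀ ⦃w w'⦄, H.Adj w w' → ∃ a ∈ ρ w, ∃ b ∈ ρ w', G.Adj a b

/-- `G + K̄₂`: two new nonadjacent vertices, each joined to every vertex of `G`. -/
def joinTwo {V : Type*} (G : SimpleGraph V) : SimpleGraph (V ⊕ Bool) where
  Adj x y :=
    match x, y with
    | .inl a, .inl b => G.Adj a b
    | .inl _, .inr _ => True
    | .inr _, .inl _ => True
    | .inr _, .inr _ => False
  symm := by
    constructor
    rintro (a | a) (b | b) h
    · exact h.symm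
    · exact h
    · exact h
    · exact h
  loopless := by
    constructor
    rintro (a | a) h
    · exact G.loopless.irrefl a h
    · exact h

/-- `G = (K₆ ∪ K₆) \ {(e,f)}`: two copies of `K₆` glued along the two vertices
`e = 0`, `f = 1` (the first copy on `{0,…,5}`, the second on `{0,1,6,…,9}`), with the
edge `ef` deleted. -/
def gluedK6 : SimpleGraph (Fin 10) where
  Adj a b := a ≠ b ∧ ¬(a ≤ 1 ∧ b ≤ 1) ∧
    ((a ≤ 5 ∧ b ≤ 5) ∨ ((a ≤ 1 ∨ 6 ≤ a) ∧ (b ≤ 1 ∨ 6 ≤ b)))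
  symm := by
    constructor
    rintro a b ⟨h1, h2, h3⟩
    exact ⟨h1.symm, by tauto, by tauto⟩
  loopless := by constructor; intro a h; exact h.1 rfl

/-- `α₁`, the minor-minimal nonouter-projective-planar graph relevant here:
the disjoint union of two copies of `K₄`. -/
def alpha1 : SimpleGraph (Fin 4 ⊕ Fin 4) where
  Adj x y :=
    match x, y with
    | .inl a, .inl b => a ≠ b
    | .inr a, .inr b => a ≠ b
    | _, _ => False
  symm := by
    constructor
    rintro (a | a) (b | b) h <;> first | exact h.symm | exact h
  loopless := by
    constructor
    rintro (a | a) h <;> exact h rfl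

/-! `gluedK6` is in fact isomorphic to `α₁ + K̄₂`: `e` and `f` become the two cone vertices, and
each copy of `K₆` minus the edge `ef` is a `K₄` of `α₁` joined to both of them. A copy of a graph
is a minor with singleton branch sets. -/

theorem SimpleGraph.connected_induce_singleton {V : Type*} (G : SimpleGraph V) (x : V) :
    (G.induce ({x} : Set V)).Connected :=
  @Connected.mk _ _ .of_subsingleton ⟨⟨x, rfl⟩⟩

theorem IsMinor.of_copy {W V : Type*} {H : SimpleGraph W} {G : SimpleGraph V} (f : Copy H G) :
    IsMinor H G :=
  ⟨fun w => {f.toHom w}, fun _ => Set.singleton_nonempty _,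
    fun _ => G.connected_induce_singleton _,
    fun _ _ hne => Set.disjoint_singleton.mpr (f.injective.ne hne),
    fun _ _ h => ⟨_, rfl, _, rfl, f.toHom.map_adj h⟩⟩

instance : DecidableRel gluedK6.Adj := fun a b =>
  inferInstanceAs (Decidable (a ≠ b ∧ ¬(a ≤ 1 ∧ b ≤ 1) ∧
    ((a ≤ 5 ∧ b ≤ 5) ∨ ((a ≤ 1 ∨ 6 ≤ a) ∧ (b ≤ 1 ∨ 6 ≤ b)))))

instance : DecidableRel alpha1.Adj
  | .inl a, .inl b => inferInstanceAs (Decidable (a ≠ b))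
  | .inr a, .inr b => inferInstanceAs (Decidable (a ≠ b))
  | .inl _, .inr _ => isFalse id
  | .inr _, .inl _ => isFalse id

instance {V : Type*} (G : SimpleGraph V) [DecidableRel G.Adj] : DecidableRel (joinTwo G).Adj
  | .inl a, .inl b => inferInstanceAs (Decidable (G.Adj a b))
  | .inl _, .inr _ => isTrue trivial
  | .inr _, .inl _ => isTrue trivial
  | .inr _, .inr _ => isFalse id

def gluedK6ToJoin : Fin 10 → (Fin 4 ⊕ Fin 4) ⊕ Bool
  | 0 => .inr false
  | 1 => .inr true
  | 2 => .inl (.inl 0)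
  | 3 => .inl (.inl 1)
  | 4 => .inl (.inl 2)
  | 5 => .inl (.inl 3)
  | 6 => .inl (.inr 0)
  | 7 => .inl (.inr 1)
  | 8 => .inl (.inr 2)
  | 9 => .inl (.inr 3)

def joinToGluedK6 : (Fin 4 ⊕ Fin 4) ⊕ Bool → Fin 10
  | .inr false => 0
  | .inr true => 1
  | .inl (.inl i) => i.castAdd 6 + 2
  | .inl (.inr i) => i.castAdd 6 + 6

def gluedK6IsoJoinAlpha1 : gluedK6 ≃g joinTwo alpha1 where
  toFun := gluedK6ToJoin
  invFun := joinToGluedK6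
  left_inv := by decide
  right_inv := by decide
  map_rel_iff' := by decide

/-- `(K₆ ∪ K₆) \ {(e,f)}` is a minor of `α₁ + K̄₂`.  (Consequently,
since `(K₆ ∪ K₆) \ {(e,f)}` is intrinsically projectively linked and the IPL property
passes to graphs containing an IPL minor, `α₁ + K̄₂` is IPL.) -/
theorem gluedK6_isMinor_alpha1_join : IsMinor gluedK6 (joinTwo alpha1) :=
  .of_copy gluedK6IsoJoinAlpha1.toCopy
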